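/- arXiv:2007.00002 — 2 statements merged into one kernel-verified Lean document; each statement's English description precedes it below -/
import Mathlib

section
/- De Gua's theorem: in a tetrahedron OABC where the three edges OA, OB, OC are pairwise orthogonal with lengths x, y, z, the area A of face ABC satisfies A² = (xy/2)² + (xz/2)² + (yz/2)², i.e., the square of the area of the face opposite the right-angle corner equals the sum of squares of the areas of the other three faces. -/
open EuclideanSpace

/-- The cross product of two vectors in `EuclideanSpace ℝ (Fin 3)`. -/
noncomputable def cross3 (u v : EuclideanSpace ℝ (Fin 3)) :
    EuclideanSpace ℝ (Fin 3) :=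
  (EuclideanSpace.equiv (Fin 3) ℝ).symm
    ![u 1 * v 2 - u 2 * v 1, u 2 * v 0 - u 0 * v 2, u 0 * v 1 - u 1 * v 0]

/-- The area of the triangle `A B C` in space: half the norm of the cross
product of the edge vectors. -/
noncomputable def triArea3 (A B C : EuclideanSpace ℝ (Fin 3)) : ℝ :=
  ‖cross3 (B - A) (C - A)‖ / 2

/-- **De Gua's theorem**: in a tetrahedron `O A B C` whose edges `OA`, `OB`,
`OC` are pairwise orthogonal with lengths `x`, `y`, `z`, the area of the face
`A B C` satisfies `area² = (xy/2)² + (xz/2)² + (yz/2)²`. -/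
theorem de_gua (O A B C : EuclideanSpace ℝ (Fin 3)) (x y z : ℝ)
    (hAB : inner ℝ (A - O) (B - O) = (0 : ℝ))
    (hAC : inner ℝ (A - O) (C - O) = (0 : ℝ))
    (hBC : inner ℝ (B - O) (C - O) = (0 : ℝ))
    (hx : x = ‖A - O‖) (hy : y = ‖B - O‖) (hz : z = ‖C - O‖) :
    triArea3 A B C ^ 2 =
      (x * y / 2) ^ 2 + (x * z / 2) ^ 2 + (y * z / 2) ^ 2 := by
  have hx2 : x ^ 2 = inner ℝ (A - O) (A - O) := by
    rw [hx, real_inner_self_eq_norm_sq]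
  have hy2 : y ^ 2 = inner ℝ (B - O) (B - O) := by
    rw [hy, real_inner_self_eq_norm_sq]
  have hz2 : z ^ 2 = inner ℝ (C - O) (C - O) := by
    rw [hz, real_inner_self_eq_norm_sq]
  have harea : triArea3 A B C ^ 2
      = inner ℝ (cross3 (B - A) (C - A)) (cross3 (B - A) (C - A)) / 4 := by
    rw [triArea3, div_pow, real_inner_self_eq_norm_sq]; norm_num
  rw [harea, show (x*y/2)^2 + (x*z/2)^2 + (y*z/2)^2
      = (x^2*y^2 + x^2*z^2 + y^2*z^2)/4 by ring, hx2, hy2, hz2]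
  have hcoord : ∀ (w : Fin 3 → ℝ) (i : Fin 3),
      (EuclideanSpace.equiv (Fin 3) ℝ).symm w i = w i := fun _ _ => rfl
  simp only [cross3, hcoord, PiLp.inner_apply, RCLike.inner_apply, conj_trivial,
    Fin.sum_univ_three, PiLp.sub_apply,
    Matrix.cons_val_zero, Matrix.cons_val_one, Matrix.head_cons,
    Matrix.cons_val_two, Matrix.tail_cons] at *
  linear_combination
    (-((A 0-O 0)*(B 0-O 0)+(A 1-O 1)*(B 1-O 1)+(A 2-O 2)*(B 2-O 2)) + 2*((B 0-O 0)*(C 0-O 0)+(B 1-O 1)*(C 1-O 1)+(B 2-O 2)*(C 2-O 2)) + 2*((A 0-O 0)*(C 0-O 0)+(A 1-O 1)*(C 1-O 1)+(A 2-O 2)*(C 2-O 2)) - 2*((C 0-O 0)*(C 0-O 0)+(C 1-O 1)*(C 1-O 1)+(C 2-O 2)*(C 2-O 2)))/4 * hAB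
    + (-((A 0-O 0)*(C 0-O 0)+(A 1-O 1)*(C 1-O 1)+(A 2-O 2)*(C 2-O 2)) + 2*((B 0-O 0)*(C 0-O 0)+(B 1-O 1)*(C 1-O 1)+(B 2-O 2)*(C 2-O 2)) - 2*((B 0-O 0)*(B 0-O 0)+(B 1-O 1)*(B 1-O 1)+(B 2-O 2)*(B 2-O 2)))/4 * hAC
    + (-((B 0-O 0)*(C 0-O 0)+(B 1-O 1)*(C 1-O 1)+(B 2-O 2)*(C 2-O 2)) - 2*((A 0-O 0)*(A 0-O 0)+(A 1-O 1)*(A 1-O 1)+(A 2-O 2)*(A 2-O 2)))/4 * hBC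
end

section
/- Euler's triangle theorem: in a nondegenerate triangle, the distance d between the circumcenter and incenter satisfies d² = R(R − 2r), where R is the circumradius and r is the inradius. In particular R ≥ 2r. -/
open EuclideanGeometry
open RealInnerProductSpace

lemma infDist_line {E : Type*} [NormedAddCommGroup E] [InnerProductSpace ℝ E]
    (P B C q : E) (hq : q ∈ line[ℝ, B, C])
    (horth : ⟪P - q, C - B⟫ = 0) :
    Metric.infDist P (affineSpan ℝ {B, C} : Set E) = dist P q := by
  have key : ∀ y ∈ (affineSpan ℝ ({B, C} : Set E) : Set E), dist P q ≤ dist P y := by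
    intro y hy
    obtain ⟨σ, hσ⟩ : ∃ σ : ℝ, σ • (C -ᵥ B) = q -ᵥ B := by
      rw [← vadd_left_mem_affineSpan_pair]; simpa using hq
    obtain ⟨τ, hτ⟩ : ∃ τ : ℝ, τ • (C -ᵥ B) = y -ᵥ B := by
      rw [← vadd_left_mem_affineSpan_pair]; simpa using hy
    have hqy : q - y = (σ - τ) • (C - B) := by
      simp only [vsub_eq_sub] at hσ hτ; rw [sub_smul, hσ, hτ]; abel
    have hPy : P - y = (P - q) + (q - y) := by abel
    have h2 : ‖P - y‖ ^ 2 = ‖P - q‖ ^ 2 + ‖q - y‖ ^ 2 := by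
      rw [hPy, norm_add_sq_real, hqy, real_inner_smul_right, horth]; ring
    have h3 : dist P y ^ 2 = dist P q ^ 2 + ‖q - y‖ ^ 2 := by
      rw [dist_eq_norm, dist_eq_norm, h2]
    nlinarith [dist_nonneg (x := P) (y := q), dist_nonneg (x := P) (y := y), sq_nonneg (‖q - y‖)]
  apply le_antisymm (Metric.infDist_le_dist_of_mem hq)
  by_contra h
  push_neg at h
  obtain ⟨y, hy, hlt⟩ := (Metric.infDist_lt_iff ⟨q, hq⟩).1 h
  exact absurd hlt (not_lt.2 (key y hy))

/-- The incenter of the triangle `A B C`, as the barycentric combination of the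
vertices weighted by the opposite side lengths. -/
noncomputable def incenter (A B C : EuclideanSpace ℝ (Fin 2)) :
    EuclideanSpace ℝ (Fin 2) :=
  (dist B C / (dist B C + dist C A + dist A B)) • A +
    (dist C A / (dist B C + dist C A + dist A B)) • B +
    (dist A B / (dist B C + dist C A + dist A B)) • C

/-- The inradius of the triangle `A B C`: the distance from the incenter to
the line through `B` and `C`. -/
noncomputable def inradius (A B C : EuclideanSpace ℝ (Fin 2)) : ℝ :=
  Metric.infDist (incenter A B C)
    (affineSpan ℝ {B, C} : Set (EuclideanSpace ℝ (Fin 2)))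

set_option maxHeartbeats 2000000 in
/-- **Euler's triangle theorem**: in a nondegenerate triangle, the distance `d`
between the circumcenter and the incenter satisfies `d² = R(R − 2r)`, where
`R` is the circumradius and `r` the inradius; in particular `2r ≤ R`. -/
theorem euler_triangle (t : Affine.Triangle ℝ (EuclideanSpace ℝ (Fin 2)))
    (R r d : ℝ) (hR : R = t.circumradius)
    (hr : r = inradius (t.points 0) (t.points 1) (t.points 2))
    (hd : d = dist t.circumcenter
      (incenter (t.points 0) (t.points 1) (t.points 2))) :
    d ^ 2 = R * (R - 2 * r) ∧ 2 * r ≤ R := by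
  set A := t.points 0 with hA
  set B := t.points 1 with hB
  set C := t.points 2 with hC
  set O := t.circumcenter with hO
  set a := dist B C with ha_def
  set b := dist C A with hb_def
  set c := dist A B with hc_def
  set s := a + b + c with hs_def
  have hinj := t.independent.injective
  have hAB : A ≠ B := fun h => by simpa using hinj h
  have hBC : B ≠ C := fun h => by simpa using hinj h
  have hCA : C ≠ A := fun h => by simpa using (hinj h).symm
  have ha : 0 < a := dist_pos.2 hBC
  have hb : 0 < b := dist_pos.2 hCA
  have hc : 0 < c := dist_pos.2 hAB
  have hs : 0 < s := by positivity
  -- circumcenter distances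
  have hOA : ‖O - A‖ = R := by
    rw [← dist_eq_norm, dist_comm, hR]; exact t.dist_circumcenter_eq_circumradius 0
  have hOB : ‖O - B‖ = R := by
    rw [← dist_eq_norm, dist_comm, hR]; exact t.dist_circumcenter_eq_circumradius 1
  have hOC : ‖O - C‖ = R := by
    rw [← dist_eq_norm, dist_comm, hR]; exact t.dist_circumcenter_eq_circumradius 2
  have hR0 : 0 ≤ R := hOA ▸ norm_nonneg _
  have hRpos : 0 < R := by
    rcases hR0.lt_or_eq with h | h
    · exact h
    · exfalso
      apply hAB
      have h1 : O - A = 0 := by rwa [← norm_eq_zero, hOA, eq_comm]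
      have h2 : O - B = 0 := by rwa [← norm_eq_zero, hOB, eq_comm]
      have e1 := sub_eq_zero.1 h1
      have e2 := sub_eq_zero.1 h2
      exact e1.symm.trans e2
  -- inner product abbreviation
  set p : ℝ := ⟪B - A, C - A⟫ with hp_def
  have hcu : ‖B - A‖ = c := by rw [← dist_eq_norm, dist_comm]
  have hbv : ‖C - A‖ = b := by rw [← dist_eq_norm]
  have hacb : ‖C - B‖ = a := by rw [← dist_eq_norm, dist_comm]
  have huu : ⟪B - A, B - A⟫ = c ^ 2 := by rw [real_inner_self_eq_norm_sq, hcu]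
  have hvv : ⟪C - A, C - A⟫ = b ^ 2 := by rw [real_inner_self_eq_norm_sq, hbv]
  have ha2 : a ^ 2 = b ^ 2 + c ^ 2 - 2 * p := by
    have h1 : C - B = (C - A) - (B - A) := by abel
    have : a ^ 2 = ‖(C - A) - (B - A)‖ ^ 2 := by rw [← h1, hacb]
    rw [this, norm_sub_sq_real, hcu, hbv, real_inner_comm]; ring
  -- circumcenter equations
  have eq1 : 2 * ⟪O - A, B - A⟫ = c ^ 2 := by
    have h1 : O - B = (O - A) - (B - A) := by abel
    have h2 : R ^ 2 = ‖(O - A) - (B - A)‖ ^ 2 := by rw [← h1, hOB]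
    rw [norm_sub_sq_real, hOA, hcu] at h2
    linarith
  have eq2 : 2 * ⟪O - A, C - A⟫ = b ^ 2 := by
    have h1 : O - C = (O - A) - (C - A) := by abel
    have h2 : R ^ 2 = ‖(O - A) - (C - A)‖ ^ 2 := by rw [← h1, hOC]
    rw [norm_sub_sq_real, hOA, hbv] at h2
    linarith
  -- linear independence and span
  have hnc : ¬ Collinear ℝ ({A, B, C} : Set (EuclideanSpace ℝ (Fin 2))) := by
    have h := t.independent
    rw [affineIndependent_iff_not_collinear_of_ne (i₁ := 0) (i₂ := 1) (i₃ := 2)] at h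
    · exact h
    all_goals decide
  have hLI : LinearIndependent ℝ ![B - A, C - A] := by
    rw [linearIndependent_fin2]
    constructor
    · simpa using sub_ne_zero.2 hCA
    · intro x hx
      simp only [Matrix.cons_val_one, Matrix.head_cons, Matrix.cons_val_zero] at hx
      apply hnc
      apply (collinear_iff_of_mem (Set.mem_insert A {B, C})).2
      refine ⟨C - A, ?_⟩
      intro q hq
      rcases hq with h | h | h
      · exact ⟨0, by simp [h]⟩
      · exact ⟨x, by rw [h]; simp only [vadd_eq_add, hx]; abel⟩
      · exact ⟨1, by rw [h]; simp only [vadd_eq_add, one_smul]; abel⟩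
  have hspan : Submodule.span ℝ {B - A, C - A} = ⊤ := by
    have h2 := hLI.span_eq_top_of_card_eq_finrank (by simp)
    rw [show ({B - A, C - A} : Set _) = Set.range ![B - A, C - A] by
      simp [Matrix.range_cons, Matrix.range_empty]
      exact Set.pair_comm (B - A) (C - A)]
    exact h2
  obtain ⟨α, β, hw⟩ := Submodule.mem_span_pair.1
    (hspan ▸ Submodule.mem_top : O - A ∈ Submodule.span ℝ {B - A, C - A})
  -- circumradius identity
  have hwu : ⟪O - A, B - A⟫ = α * c ^ 2 + β * p := by
    rw [← hw, inner_add_left, real_inner_smul_left, real_inner_smul_left, huu,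
      real_inner_comm (B - A) (C - A), hp_def]
  have hwv : ⟪O - A, C - A⟫ = α * p + β * b ^ 2 := by
    rw [← hw, inner_add_left, real_inner_smul_left, real_inner_smul_left, hvv]
  have e1 : 2 * (α * c ^ 2 + β * p) = c ^ 2 := by linear_combination eq1 - 2 * hwu
  have e2 : 2 * (α * p + β * b ^ 2) = b ^ 2 := by linear_combination eq2 - 2 * hwv
  have hww : R ^ 2 = α ^ 2 * c ^ 2 + 2 * α * β * p + β ^ 2 * b ^ 2 := by
    have h0 : R ^ 2 = ⟪O - A, O - A⟫ := by rw [real_inner_self_eq_norm_sq, hOA]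
    rw [h0, ← hw]
    simp only [inner_add_left, inner_add_right, real_inner_smul_left, real_inner_smul_right]
    rw [huu, hvv, real_inner_comm (B - A) (C - A), hp_def]
    ring
  have h2R : 2 * R ^ 2 = α * c ^ 2 + β * b ^ 2 := by
    linear_combination 2 * hww + α * e1 + β * e2
  have key : 4 * R ^ 2 * (b ^ 2 * c ^ 2 - p ^ 2) = a ^ 2 * b ^ 2 * c ^ 2 := by
    linear_combination 2 * (b ^ 2 * c ^ 2 - p ^ 2) * h2R + b ^ 2 * (c ^ 2 - p) * e1
      + c ^ 2 * (b ^ 2 - p) * e2 - b ^ 2 * c ^ 2 * ha2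
  -- incenter part
  have hs0 : s ≠ 0 := ne_of_gt hs
  have hs0' : a + b + c ≠ 0 := by rw [← hs_def]; exact hs0
  set I := incenter A B C with hI_def
  have hI : I = (a / s) • A + (b / s) • B + (c / s) • C := rfl
  have hIB : I - B = (-(a / s)) • (B - A) + (c / s) • (C - B) := by
    rw [hI]
    match_scalars
    all_goals (rw [hs_def]; try field_simp; try ring)
  set k : ℝ := ⟪I - B, C - B⟫ with hk_def
  set μ : ℝ := k / a ^ 2 with hμ_def
  set q : EuclideanSpace ℝ (Fin 2) := μ • (C - B) + B with hq_def
  have hCB2 : ⟪C - B, C - B⟫ = a ^ 2 := by rw [real_inner_self_eq_norm_sq, hacb]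
  have hIq : I - q = (I - B) - μ • (C - B) := by rw [hq_def]; abel
  have horth : ⟪I - q, C - B⟫ = 0 := by
    rw [hIq, inner_sub_left, real_inner_smul_left, hCB2, ← hk_def, hμ_def]
    field_simp; ring
  have hq_mem : q ∈ line[ℝ, B, C] := by
    have h := smul_vsub_vadd_mem_affineSpan_pair μ B C
    simpa [vsub_eq_sub, vadd_eq_add, hq_def] using h
  have hr_eq : r = dist I q := by
    rw [hr]
    exact infDist_line I B C q hq_mem horth
  have hrnn : 0 ≤ r := hr_eq ▸ dist_nonneg
  have hucb : ⟪B - A, C - B⟫ = p - c ^ 2 := by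
    have h1 : C - B = (C - A) - (B - A) := by abel
    rw [h1, inner_sub_right, huu, hp_def]
  have hcbu : ⟪C - B, B - A⟫ = p - c ^ 2 := by
    rw [real_inner_comm (B - A) (C - B)]; exact hucb
  have hk : k = (-(a / s)) * (p - c ^ 2) + (c / s) * a ^ 2 := by
    rw [hk_def, hIB, inner_add_left, real_inner_smul_left, real_inner_smul_left, hucb, hCB2]
  have hIB2 : ⟪I - B, I - B⟫ = (a / s) ^ 2 * c ^ 2 + (c / s) ^ 2 * a ^ 2
      - 2 * (a / s) * (c / s) * (p - c ^ 2) := by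
    rw [hIB]
    simp only [inner_add_left, inner_add_right, real_inner_smul_left, real_inner_smul_right]
    rw [huu, hCB2, hucb, hcbu]
    ring
  have hμa : μ * a ^ 2 = k := by rw [hμ_def]; field_simp
  have h2' : r ^ 2 * a ^ 2 = ⟪I - B, I - B⟫ * a ^ 2 - k ^ 2 := by
    have e : ∀ X Y : EuclideanSpace ℝ (Fin 2), ⟪X - μ • Y, X - μ • Y⟫
        = ⟪X, X⟫ - 2 * μ * ⟪X, Y⟫ + μ ^ 2 * ⟪Y, Y⟫ := by
      intro X Y
      simp only [inner_sub_left, inner_sub_right, real_inner_smul_left, real_inner_smul_right]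
      rw [real_inner_comm X Y]
      ring
    have h2 : r ^ 2 = ⟪I - B, I - B⟫ - 2 * μ * k + μ ^ 2 * a ^ 2 := by
      rw [hr_eq, dist_eq_norm, ← real_inner_self_eq_norm_sq, hIq, e, ← hk_def, hCB2]
    linear_combination a ^ 2 * h2 + (μ * a ^ 2 - k) * hμa
  have hks : k * s = a * (c * a - (p - c ^ 2)) := by
    rw [hk]; field_simp; ring
  have hms : ⟪I - B, I - B⟫ * s ^ 2 = 2 * a ^ 2 * c ^ 2 - 2 * a * c * (p - c ^ 2) := by
    rw [hIB2]; field_simp; ring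
  have hfin : r ^ 2 * s ^ 2 * a ^ 2
      = (2 * a ^ 2 * c ^ 2 - 2 * a * c * (p - c ^ 2)) * a ^ 2
        - (a * (c * a - (p - c ^ 2))) ^ 2 := by
    rw [← hms, ← hks]
    linear_combination s ^ 2 * h2'
  have hr2 : r ^ 2 * s ^ 2 = b ^ 2 * c ^ 2 - p ^ 2 := by
    apply mul_right_cancel₀ (pow_ne_zero 2 ha.ne')
    linear_combination hfin + a ^ 2 * c ^ 2 * ha2
  -- circumcenter-incenter distance
  have hsOI : s • (O - I) = a • (O - A) + b • (O - B) + c • (O - C) := by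
    rw [hI]
    match_scalars
    all_goals (rw [hs_def]; try field_simp; try ring)
  have hdOI : d = ‖O - I‖ := by rw [hd, dist_eq_norm]
  have hxx : ⟪O - A, O - A⟫ = R ^ 2 := by rw [real_inner_self_eq_norm_sq, hOA]
  have hyy : ⟪O - B, O - B⟫ = R ^ 2 := by rw [real_inner_self_eq_norm_sq, hOB]
  have hzz : ⟪O - C, O - C⟫ = R ^ 2 := by rw [real_inner_self_eq_norm_sq, hOC]
  have hxy : ⟪O - A, O - B⟫ = R ^ 2 - c ^ 2 / 2 := by
    have e : B - A = (O - A) - (O - B) := by abel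
    have h0 : c ^ 2 = ‖(O - A) - (O - B)‖ ^ 2 := by rw [← e, hcu]
    rw [norm_sub_sq_real, hOA, hOB] at h0; linarith
  have hxz : ⟪O - A, O - C⟫ = R ^ 2 - b ^ 2 / 2 := by
    have e : C - A = (O - A) - (O - C) := by abel
    have h0 : b ^ 2 = ‖(O - A) - (O - C)‖ ^ 2 := by rw [← e, hbv]
    rw [norm_sub_sq_real, hOA, hOC] at h0; linarith
  have hyz : ⟪O - B, O - C⟫ = R ^ 2 - a ^ 2 / 2 := by
    have e : C - B = (O - B) - (O - C) := by abel
    have h0 : a ^ 2 = ‖(O - B) - (O - C)‖ ^ 2 := by rw [← e, hacb]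
    rw [norm_sub_sq_real, hOB, hOC] at h0; linarith
  have hexp : ∀ X Y Z : EuclideanSpace ℝ (Fin 2), ⟪a • X + b • Y + c • Z, a • X + b • Y + c • Z⟫
      = a ^ 2 * ⟪X, X⟫ + b ^ 2 * ⟪Y, Y⟫ + c ^ 2 * ⟪Z, Z⟫
        + 2 * a * b * ⟪X, Y⟫ + 2 * a * c * ⟪X, Z⟫ + 2 * b * c * ⟪Y, Z⟫ := by
    intro X Y Z
    simp only [inner_add_left, inner_add_right, real_inner_smul_left, real_inner_smul_right]
    rw [real_inner_comm X Y, real_inner_comm X Z, real_inner_comm Y Z]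
    ring
  have hd2 : d ^ 2 * s ^ 2 = R ^ 2 * s ^ 2 - a * b * c * s := by
    have h1 : (s * d) ^ 2 = ⟪a • (O - A) + b • (O - B) + c • (O - C),
        a • (O - A) + b • (O - B) + c • (O - C)⟫ := by
      rw [← hsOI, real_inner_self_eq_norm_sq, norm_smul, hdOI, Real.norm_eq_abs,
        abs_of_pos hs]
      try ring
    rw [hexp, hxx, hyy, hzz, hxy, hxz, hyz] at h1
    rw [hs_def] at h1 ⊢
    linear_combination h1
  -- conclude
  have habc2 : (2 * R * r * s) ^ 2 = (a * b * c) ^ 2 := by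
    linear_combination 4 * R ^ 2 * hr2 + key
  have habc : 2 * R * r * s = a * b * c := by
    have hnn : 0 ≤ 2 * R * r * s :=
      mul_nonneg (mul_nonneg (mul_nonneg (by norm_num) hR0) hrnn) hs.le
    have h1 := congrArg Real.sqrt habc2
    rwa [Real.sqrt_sq hnn, Real.sqrt_sq (by positivity)] at h1
  have hmain : d ^ 2 = R * (R - 2 * r) := by
    apply mul_right_cancel₀ (pow_ne_zero 2 hs0)
    linear_combination hd2 + s * habc
  refine ⟨hmain, ?_⟩
  have h0 : 0 ≤ R * (R - 2 * r) := hmain ▸ sq_nonneg d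
  have h1 : 0 ≤ R - 2 * r := nonneg_of_mul_nonneg_right (by linarith [h0]) hRpos
  linarith
end
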